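/- Let V, W be finite-dimensional real inner product spaces, A : V → W linear, P : V → V an orthogonal projection onto a subspace H ⊆ V, and g ∈ W. If ζ ∈ H solves (P A* A P) ζ = P A* g and the restriction of A to H is surjective onto the image of A with A g-consistent (g ∈ Im A), then A ζ = g. -/
import Mathlib


open scoped RealInnerProductSpace

/-- Quotient/horizontal-space version of the natural-gradient system: if `P` is the
orthogonal projection onto a subspace `H`, `ζ ∈ H` solves `P A* A P ζ = P A* g`,
`g ∈ Im A`, and the restriction of `A` to `H` is surjective onto `Im A`,
then `A ζ = g`. -/
theorem stmt18 {V W : Type*} [NormedAddCommGroup V] [InnerProductSpace ℝ V]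
    [FiniteDimensional ℝ V] [NormedAddCommGroup W] [InnerProductSpace ℝ W]
    [FiniteDimensional ℝ W]
    (A : V →ₗ[ℝ] W) (H : Submodule ℝ V) (P : V →ₗ[ℝ] V)
    (hPmem : ∀ v : V, P v ∈ H) (hPid : ∀ v ∈ H, P v = v)
    (hPsym : ∀ u v : V, ⟪P u, v⟫ = ⟪u, P v⟫)
    (g : W) (hg : g ∈ LinearMap.range A)
    (hsurj : ∀ w ∈ LinearMap.range A, ∃ v ∈ H, A v = w)
    (ζ : V) (hζ : ζ ∈ H)
    (hsol : P (LinearMap.adjoint A (A (P ζ))) = P (LinearMap.adjoint A g)) :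
    A ζ = g := by
  have hPζ : P ζ = ζ := hPid ζ hζ
  rw [hPζ] at hsol
  -- A ζ - g is orthogonal to A(H)
  have key : ∀ v ∈ H, ⟪A v, A ζ - g⟫ = 0 := by
    intro v hv
    have h1 : ⟪A v, A ζ - g⟫ = ⟪v, LinearMap.adjoint A (A ζ) - LinearMap.adjoint A g⟫ := by
      rw [inner_sub_right, inner_sub_right, ← LinearMap.adjoint_inner_right,
        ← LinearMap.adjoint_inner_right]
    rw [h1]
    have h2 : ⟪v, LinearMap.adjoint A (A ζ)⟫ = ⟪v, LinearMap.adjoint A g⟫ := by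
      calc ⟪v, LinearMap.adjoint A (A ζ)⟫
          = ⟪P v, LinearMap.adjoint A (A ζ)⟫ := by rw [hPid v hv]
        _ = ⟪v, P (LinearMap.adjoint A (A ζ))⟫ := hPsym _ _
        _ = ⟪v, P (LinearMap.adjoint A g)⟫ := by rw [hsol]
        _ = ⟪P v, LinearMap.adjoint A g⟫ := (hPsym _ _).symm
        _ = ⟪v, LinearMap.adjoint A g⟫ := by rw [hPid v hv]
    rw [inner_sub_right, h2, sub_self]
  -- A ζ - g ∈ Im A, so pick v ∈ H with A v = A ζ - g
  have hmem : A ζ - g ∈ LinearMap.range A := by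
    obtain ⟨u, hu⟩ := hg
    exact ⟨ζ - u, by simp [hu]⟩
  obtain ⟨v, hv, hAv⟩ := hsurj _ hmem
  have := key v hv
  rw [hAv, inner_self_eq_zero] at this
  exact sub_eq_zero.mp this
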